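/- Let p be an odd prime and a, b, c ∈ 𝔽_p with a ≠ 0, b = 0 and c ≠ 0. Then D(φ,p) = p − 1, and the only extremal φ-zero-free sequence (i.e., φ-zero-free multiset of cardinality p − 2) is [c·a⁻¹]^{p−2}. -/

import Mathlib

/-!
With `b = 0` we have `φ(T) = a·σ(T)·(σ(T) + c·a⁻¹)` for the sum `σ(T)` of `T`, so a multiset is
φ-zero-free exactly when it is zero-sum-free and `-c·a⁻¹` is not among its subsums. Adjoining a
nonzero element `x` replaces the set of subsums `A` by `{0, x} + A`, so by Cauchy–Davenport a
zero-sum-free `S` has at least `min p (|S| + 1)` subsums, and at least `min p (|S| + 2)` if it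
contains two distinct elements `x ≠ y` (then `{0, x} + {0, y}` has four elements, as `x + y ≠ 0`).
Missing the value `-c·a⁻¹` therefore forces `|S| ≤ p - 2`, with equality only for a constant
`S = [x]^(p-2)`; its subsums are all of `𝔽_p` except `-x`, so `x = c·a⁻¹`.
-/

/-- `phi a b c S = a·(∑_{x∈S} x)² + b·(∑_{x∈S} x²) + c·(∑_{x∈S} x)`,
sums taken with multiplicity. -/
def phi {p : ℕ} (a b c : ZMod p) (S : Multiset (ZMod p)) : ZMod p :=
  a * S.sum ^ 2 + b * (S.map (fun x => x ^ 2)).sum + c * S.sum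

/-- `S` is φ-zero-free: no nonempty submultiset `T` of `S` has `phi a b c T = 0`. -/
def PhiZeroFree {p : ℕ} (a b c : ZMod p) (S : Multiset (ZMod p)) : Prop :=
  ∀ T : Multiset (ZMod p), T ≤ S → T ≠ 0 → phi a b c T ≠ 0

/-- The set of positive lengths `ℓ` such that every multiset over `ZMod p` of
cardinality at least `ℓ` has a nonempty submultiset `T` with `phi a b c T = 0`.
The Davenport φ-constant `D(φ,p)` is the least element of this set. -/
def DavSet {p : ℕ} (a b c : ZMod p) : Set ℕ :=
  {ℓ : ℕ | 0 < ℓ ∧ ∀ S : Multiset (ZMod p), ℓ ≤ Multiset.card S →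
    ∃ T : Multiset (ZMod p), T ≤ S ∧ T ≠ 0 ∧ phi a b c T = 0}

open Finset Pointwise

namespace Multiset

variable {M : Type*} [AddCommMonoid M]

section Subsums

variable [DecidableEq M]

def subsums (S : Multiset M) : Finset M :=
  (S.powerset.map Multiset.sum).toFinset

theorem mem_subsums {S : Multiset M} {z : M} : z ∈ S.subsums ↔ ∃ T ≤ S, T.sum = z := by
  simp [subsums, mem_powerset]

theorem zero_mem_subsums (S : Multiset M) : (0 : M) ∈ S.subsums :=
  mem_subsums.2 ⟨0, zero_le S, sum_zero⟩

theorem subsums_cons (x : M) (S : Multiset M) :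
    (x ::ₘ S).subsums = {0, x} + S.subsums := by
  ext z
  simp [subsums, powerset_cons, Finset.mem_add, or_comm]

theorem subsums_replicate (n : ℕ) (x : M) :
    (replicate n x).subsums = (Finset.range (n + 1)).image (· • x) := by
  ext z
  simp [mem_subsums, le_replicate_iff]

end Subsums

def ZeroSumFree (S : Multiset M) : Prop :=
  ∀ T ≤ S, T ≠ 0 → T.sum ≠ 0

theorem ZeroSumFree.ne_zero_of_mem {S : Multiset M} (h : S.ZeroSumFree) {x : M} (hx : x ∈ S) :
    x ≠ 0 := by
  simpa using h {x} (singleton_le.2 hx) (singleton_ne_zero x)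

theorem ZeroSumFree.add_ne_zero {x y : M} {T : Multiset M} (h : (x ::ₘ y ::ₘ T).ZeroSumFree) :
    x + y ≠ 0 := by
  simpa using h {x, y} (by simp [cons_le_cons_iff]) (by simp)

end Multiset

theorem Finset.card_pair_add_pair {M : Type*} [AddCancelCommMonoid M] [DecidableEq M] {x y : M}
    (hx : x ≠ 0) (hy : y ≠ 0) (hxy : x ≠ y) (hxy0 : x + y ≠ 0) :
    #(({0, x} : Finset M) + {0, y}) = 4 := by
  have : ({0, x} : Finset M) + {0, y} = {0, x, y, x + y} := by
    ext z
    simp only [mem_add, mem_insert, mem_singleton, exists_eq_or_imp, exists_eq_left]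
    grind
  rw [this, card_insert_of_notMem, card_insert_of_notMem, card_pair]
  all_goals grind

namespace ZMod

variable {p : ℕ} [Fact p.Prime]

open Multiset

theorem min_le_card_subsums {S : Multiset (ZMod p)} (hS : ∀ x ∈ S, x ≠ 0) :
    min p (Multiset.card S + 1) ≤ #S.subsums := by
  induction S using Multiset.induction with
  | empty => simp [subsums]
  | cons x S ih =>
    have hx : #({0, x} : Finset (ZMod p)) = 2 := card_pair (hS x (mem_cons_self x S)).symm
    have := cauchy_davenport Fact.out (insert_nonempty 0 {x}) ⟨0, zero_mem_subsums S⟩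
    rw [hx, ← subsums_cons] at this
    have := ih fun y hy => hS y (mem_cons_of_mem hy)
    simp only [Multiset.card_cons]
    omega

theorem min_le_card_subsums_of_ne {S : Multiset (ZMod p)} (hS : S.ZeroSumFree) {x y : ZMod p}
    (hx : x ∈ S) (hy : y ∈ S) (hxy : x ≠ y) : min p (Multiset.card S + 2) ≤ #S.subsums := by
  obtain ⟨T, rfl⟩ : ∃ T, S = x ::ₘ y ::ₘ T := by
    obtain ⟨T, hT⟩ := exists_cons_of_mem ((mem_erase_of_ne hxy.symm).2 hy)
    exact ⟨T, by rw [← hT, cons_erase hx]⟩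
  have h4 := card_pair_add_pair (hS.ne_zero_of_mem hx) (hS.ne_zero_of_mem hy) hxy hS.add_ne_zero
  have hne : (({0, x} : Finset (ZMod p)) + {0, y}).Nonempty := Finset.card_pos.1 (by omega)
  have := cauchy_davenport Fact.out hne ⟨0, zero_mem_subsums T⟩
  rw [h4, add_assoc, ← subsums_cons, ← subsums_cons] at this
  have := min_le_card_subsums (S := T) fun z hz =>
    hS.ne_zero_of_mem (mem_cons_of_mem (mem_cons_of_mem hz))
  simp only [Multiset.card_cons]
  omega

theorem nsmul_ne_zero_of_lt {x : ZMod p} (hx : x ≠ 0) {k : ℕ} (hk0 : k ≠ 0) (hk : k < p) :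
    k • x ≠ 0 := by
  rw [nsmul_eq_mul]
  refine mul_ne_zero (fun h => hk0 ?_) hx
  exact Nat.eq_zero_of_dvd_of_lt ((natCast_eq_zero_iff k p).1 h) hk

theorem zeroSumFree_replicate {x : ZMod p} (hx : x ≠ 0) {n : ℕ} (hn : n < p) :
    (replicate n x).ZeroSumFree := by
  intro T hT hT0
  obtain ⟨k, hk, rfl⟩ := le_replicate_iff.1 hT
  rw [sum_replicate]
  exact nsmul_ne_zero_of_lt hx (by rintro rfl; exact hT0 rfl) (by omega)

theorem subsums_replicate_sub_two {x : ZMod p} (hx : x ≠ 0) :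
    (replicate (p - 2) x).subsums = Finset.univ.erase (-x) := by
  have hp := (Fact.out : p.Prime).two_le
  have hsub : (replicate (p - 2) x).subsums ⊆ Finset.univ.erase (-x) := by
    intro z hz
    rw [subsums_replicate] at hz
    obtain ⟨m, hm, rfl⟩ := Finset.mem_image.1 hz
    refine Finset.mem_erase.2 ⟨fun h => ?_, Finset.mem_univ _⟩
    refine nsmul_ne_zero_of_lt hx m.succ_ne_zero (by rw [Finset.mem_range] at hm; omega) ?_
    rw [succ_nsmul, h, neg_add_cancel]
  refine Finset.eq_of_subset_of_card_le hsub ?_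
  have := min_le_card_subsums (S := replicate (p - 2) x) fun y hy => by
    rwa [eq_of_mem_replicate hy]
  rw [Finset.card_erase_of_mem (Finset.mem_univ _), Finset.card_univ, card, card_replicate] at *
  omega

end ZMod

section BZero

variable {p : ℕ} [Fact p.Prime] {a c : ZMod p}

open Multiset

theorem phi_zero_eq_zero_iff (ha : a ≠ 0) (T : Multiset (ZMod p)) :
    phi a 0 c T = 0 ↔ T.sum = 0 ∨ T.sum = -(c * a⁻¹) := by
  have : phi a 0 c T = a * T.sum * (T.sum + c * a⁻¹) := by
    simp only [phi]
    field_simp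
    ring
  rw [this, mul_eq_zero, mul_eq_zero, add_eq_zero_iff_eq_neg]
  simp [ha]

theorem phiZeroFree_zero_iff (ha : a ≠ 0) (hc : c ≠ 0) {S : Multiset (ZMod p)} :
    PhiZeroFree a 0 c S ↔ S.ZeroSumFree ∧ -(c * a⁻¹) ∉ S.subsums := by
  constructor
  · intro h
    refine ⟨fun T hT hT0 hs => h T hT hT0 ((phi_zero_eq_zero_iff ha T).2 (Or.inl hs)), ?_⟩
    intro hmem
    obtain ⟨T, hT, hs⟩ := mem_subsums.1 hmem
    have hT0 : T ≠ 0 := by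
      rintro rfl
      simp_all
    exact h T hT hT0 ((phi_zero_eq_zero_iff ha T).2 (Or.inr hs))
  · rintro ⟨hzs, hu⟩ T hT hT0 hphi
    rcases (phi_zero_eq_zero_iff ha T).1 hphi with hs | hs
    · exact hzs T hT hT0 hs
    · exact hu (mem_subsums.2 ⟨T, hT, hs⟩)

theorem phiZeroFree_replicate (ha : a ≠ 0) (hc : c ≠ 0) :
    PhiZeroFree a 0 c (replicate (p - 2) (c * a⁻¹)) := by
  have hu : c * a⁻¹ ≠ 0 := mul_ne_zero hc (inv_ne_zero ha)
  rw [phiZeroFree_zero_iff ha hc, ZMod.subsums_replicate_sub_two hu]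
  exact ⟨ZMod.zeroSumFree_replicate hu (by have := (Fact.out : p.Prime).pos; omega), by simp⟩

namespace PhiZeroFree

variable {S : Multiset (ZMod p)}

theorem card_subsums_lt (ha : a ≠ 0) (hc : c ≠ 0) (h : PhiZeroFree a 0 c S) :
    #S.subsums < p := by
  simpa using Finset.card_lt_univ_of_notMem ((phiZeroFree_zero_iff ha hc).1 h).2

theorem card_add_two_le (ha : a ≠ 0) (hc : c ≠ 0) (h : PhiZeroFree a 0 c S) :
    card S + 2 ≤ p := by
  have := ZMod.min_le_card_subsums fun x hx =>
    ((phiZeroFree_zero_iff ha hc).1 h).1.ne_zero_of_mem hx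
  have := h.card_subsums_lt ha hc
  omega

theorem eq_replicate (ha : a ≠ 0) (hc : c ≠ 0) (h : PhiZeroFree a 0 c S)
    (hS : card S + 2 = p) :
    S = replicate (p - 2) (c * a⁻¹) := by
  obtain ⟨hzs, hu⟩ := (phiZeroFree_zero_iff ha hc).1 h
  have hconst : ∀ y ∈ S, ∀ x ∈ S, y = x := by
    intro y hy x hx
    by_contra hxy
    have := ZMod.min_le_card_subsums_of_ne hzs hy hx hxy
    have := h.card_subsums_lt ha hc
    omega
  rcases S.empty_or_exists_mem with rfl | ⟨x, hx⟩
  · simp [← hS]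
  have hSx : S = replicate (p - 2) x :=
    Multiset.eq_replicate.2 ⟨by omega, fun y hy => hconst y hy x hx⟩
  rw [hSx, ZMod.subsums_replicate_sub_two (hzs.ne_zero_of_mem hx)] at hu
  simp_all

end PhiZeroFree

end BZero

theorem davenport_phi_b_zero_general (p : ℕ) (hp : p.Prime)
    (a b c : ZMod p) (ha : a ≠ 0) (hb : b = 0) (hc : c ≠ 0) :
    IsLeast (DavSet a b c) (p - 1) ∧
    ∀ S : Multiset (ZMod p),
      (PhiZeroFree a b c S ∧ Multiset.card S = p - 2) ↔
        S = Multiset.replicate (p - 2) (c * a⁻¹) := by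
  subst hb
  have : Fact p.Prime := ⟨hp⟩
  have hp2 := hp.two_le
  refine ⟨⟨⟨by omega, fun S hS => ?_⟩, fun ℓ ⟨_, hall⟩ => ?_⟩, fun S => ⟨fun ⟨h, hS⟩ => ?_, ?_⟩⟩
  · by_contra! h
    have := PhiZeroFree.card_add_two_le ha hc h
    omega
  · by_contra! hlt
    obtain ⟨T, hT, hT0, hphi⟩ :=
      hall (.replicate (p - 2) (c * a⁻¹)) (by rw [Multiset.card_replicate]; omega)
    exact phiZeroFree_replicate ha hc T hT hT0 hphi
  · exact h.eq_replicate ha hc (by omega)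
  · rintro rfl
    exact ⟨phiZeroFree_replicate ha hc, Multiset.card_replicate _ _⟩

/-- Theorem 1(iii): if `a ≠ 0`, `b = 0` and `c ≠ 0` then `D(φ,p) = p - 1` and the
only extremal φ-zero-free sequence is `[c·a⁻¹]^(p-2)`. -/
theorem davenport_phi_b_zero (p : ℕ) (hp : p.Prime) (hodd : Odd p)
    (a b c : ZMod p) (ha : a ≠ 0) (hb : b = 0) (hc : c ≠ 0) :
    IsLeast (DavSet a b c) (p - 1) ∧
    ∀ S : Multiset (ZMod p),
      (PhiZeroFree a b c S ∧ Multiset.card S = p - 2) ↔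
        S = Multiset.replicate (p - 2) (c * a⁻¹) :=
  davenport_phi_b_zero_general p hp a b c ha hb hc
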